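/- arXiv:math/0511657 — 7 statements merged into one kernel-verified Lean document; each statement's English description precedes it below -/
import Mathlib

section
/- Let V be a real vector space with a paraquaternionic triple (J₁, J₂, J₃), and let S : V → End_ℝ(V) be an ℝ-linear map admitting a decomposition S_X = S⁰_X + s¹(X)·J₁ + s²(X)·J₂ + s³(X)·J₃ with S⁰_X commuting with each Jₐ. Then the following are equivalent: (i) for every X ∈ V and every J = c₁J₁ + c₂J₂ + c₃J₃ with c₁² + c₂² − c₃² = −1 one has J∘[S_X, J] = −[S_{J X}, J]; (ii) s¹ = s² = s³ = 0; (iii) for every X ∈ V and every P = b₁J₁ + b₂J₂ + b₃J₃ with b₁² + b₂² − b₃² = 1 one has P∘[S_X, P] = −[S_{P X}, P]. (This is the algebraic core of Corollary 3.3: conditions (i) and (iii) express the coincidence of the second almost complex structures I₂^∇ on the twistor space, respectively the second almost paracomplex structures P₂^∇ on the reflector space, for two para-quaternionic connections with difference tensor S.) -/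
/-!
Since `S⁰_X` commutes with every `J`, only the imaginary part `s¹(X)J₁ + s²(X)J₂ + s³(X)J₃` of
`S_X` enters the condition, and its defect `u ↦ u[S_X, u] + [S_{uX}, u]` is a quadratic map in `u`.
A quadratic map vanishing on either hyperboloid `c₁² + c₂² - c₃² = ∓1` vanishes at `J₁`, `J₂`, `J₃`:
polarise between rational points such as `(±3/4, 0, 5/4)`. At `u = Jₐ` the defect is explicit,
and the resulting relations between `sᵃ` and `sᵇ ∘ J_c` close up to `sᵃ = -sᵃ`.
-/

namespace QuadraticMap

variable {M N : Type*} [AddCommGroup M] [Module ℝ M] [AddCommGroup N] [Module ℝ N]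
  (Q : QuadraticMap ℝ M N)

theorem map_add_add_map_sub (x y : M) : Q (x + y) + Q (x - y) = 2 • (Q x + Q y) := by
  have h := Q.polar_neg_right x y
  simp only [polar, Q.map_neg, ← sub_eq_add_neg] at h
  rw [two_smul]
  linear_combination (norm := module) h

theorem eq_zero_of_map_add_eq_zero_of_map_sub_eq_zero {x y : M} {a b : ℝ} (ha : a ≠ 0)
    (hy : Q y = 0) (hadd : Q (a • x + b • y) = 0) (hsub : Q (a • x - b • y) = 0) : Q x = 0 := by
  have h := Q.map_add_add_map_sub (a • x) (b • y)
  rw [hadd, hsub, Q.map_smul, Q.map_smul, hy, smul_zero, add_zero, add_zero,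
    ← Nat.cast_smul_eq_nsmul ℝ, smul_smul] at h
  simpa [ha] using h.symm

theorem eq_zero_of_forall_sq_add_sq_sub_sq_eq_neg_one {e₁ e₂ e₃ : M}
    (hQ : ∀ c₁ c₂ c₃ : ℝ, c₁ ^ 2 + c₂ ^ 2 - c₃ ^ 2 = -1 → Q (c₁ • e₁ + c₂ • e₂ + c₃ • e₃) = 0) :
    Q e₁ = 0 ∧ Q e₂ = 0 ∧ Q e₃ = 0 := by
  have h₃ : Q e₃ = 0 := by simpa using hQ 0 0 1 (by norm_num)
  have key : ∀ {x y : M}, Q y = 0 → Q ((3/4 : ℝ) • x + (5/4 : ℝ) • y) = 0 →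
      Q ((3/4 : ℝ) • x - (5/4 : ℝ) • y) = 0 → Q x = 0 :=
    fun hy hadd hsub => Q.eq_zero_of_map_add_eq_zero_of_map_sub_eq_zero (by norm_num) hy hadd hsub
  refine ⟨key h₃ ?_ ?_, key h₃ ?_ ?_, h₃⟩
  · simpa using hQ (3/4) 0 (5/4) (by norm_num)
  · have h := hQ (3/4) 0 (-(5/4)) (by norm_num)
    rwa [zero_smul, add_zero, neg_smul, ← sub_eq_add_neg] at h
  · simpa using hQ 0 (3/4) (5/4) (by norm_num)
  · have h := hQ 0 (3/4) (-(5/4)) (by norm_num)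
    rwa [zero_smul, zero_add, neg_smul, ← sub_eq_add_neg] at h

theorem eq_zero_of_forall_sq_add_sq_sub_sq_eq_one {e₁ e₂ e₃ : M}
    (hQ : ∀ c₁ c₂ c₃ : ℝ, c₁ ^ 2 + c₂ ^ 2 - c₃ ^ 2 = 1 → Q (c₁ • e₁ + c₂ • e₂ + c₃ • e₃) = 0) :
    Q e₁ = 0 ∧ Q e₂ = 0 ∧ Q e₃ = 0 := by
  have h₁ : Q e₁ = 0 := by simpa using hQ 1 0 0 (by norm_num)
  have h₂ : Q e₂ = 0 := by simpa using hQ 0 1 0 (by norm_num)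
  refine ⟨h₁, h₂, Q.eq_zero_of_map_add_eq_zero_of_map_sub_eq_zero (a := 3/4) (b := 5/4)
    (by norm_num) h₁ ?_ ?_⟩
  · simpa [add_comm] using hQ (5/4) 0 (3/4) (by norm_num)
  · have h := hQ (-(5/4)) 0 (3/4) (by norm_num)
    rwa [zero_smul, add_zero, neg_smul, neg_add_eq_sub] at h

end QuadraticMap

structure IsParaquaternionicTriple {A : Type*} [Ring A] (J₁ J₂ J₃ : A) : Prop where
  sq₁ : J₁ * J₁ = 1
  sq₂ : J₂ * J₂ = 1
  sq₃ : J₃ * J₃ = -1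
  mul₁₂ : J₁ * J₂ = J₃
  mul₂₁ : J₂ * J₁ = -J₃

theorem linearIndependent_pair_of_mul_eq_neg_mul {A : Type*} [Ring A] [Algebra ℝ A] [Nontrivial A]
    {P Q : A} (hP : IsUnit (P * P)) (hQ : IsUnit (Q * Q)) (hPQ : P * Q = -(Q * P)) :
    LinearIndependent ℝ ![P, Q] := by
  refine LinearIndependent.pair_iff.2 fun s t h => ?_
  have hs : (2 * s) • (P * P) = 0 := by
    calc (2 * s) • (P * P) = P * (s • P + t • Q) + (s • P + t • Q) * P := by
          simp only [mul_add, add_mul, mul_smul_comm, smul_mul_assoc, hPQ]; module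
      _ = 0 := by rw [h, mul_zero, zero_mul, add_zero]
  have ht : (2 * t) • (Q * Q) = 0 := by
    calc (2 * t) • (Q * Q) = Q * (s • P + t • Q) + (s • P + t • Q) * Q := by
          simp only [mul_add, add_mul, mul_smul_comm, smul_mul_assoc, hPQ]; module
      _ = 0 := by rw [h, mul_zero, zero_mul, add_zero]
  simp only [smul_eq_zero, hP.ne_zero, hQ.ne_zero, or_false, mul_eq_zero, two_ne_zero,
    false_or] at hs ht
  exact ⟨hs, ht⟩

namespace IsParaquaternionicTriple

section Ring

variable {A : Type*} [Ring A] {J₁ J₂ J₃ : A} (hJ : IsParaquaternionicTriple J₁ J₂ J₃)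
include hJ

theorem mul₁₃ : J₁ * J₃ = J₂ := by rw [← hJ.mul₁₂, ← mul_assoc, hJ.sq₁, one_mul]
theorem mul₃₂ : J₃ * J₂ = J₁ := by rw [← hJ.mul₁₂, mul_assoc, hJ.sq₂, mul_one]
theorem mul₃₁ : J₃ * J₁ = -J₂ := by rw [← hJ.mul₁₂, mul_assoc, hJ.mul₂₁, mul_neg, hJ.mul₁₃]
theorem mul₂₃ : J₂ * J₃ = -J₁ := by rw [← hJ.mul₁₂, ← mul_assoc, hJ.mul₂₁, neg_mul, hJ.mul₃₂]

end Ring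

section Algebra

variable {A : Type*} [Ring A] [Algebra ℝ A] {J₁ J₂ J₃ : A} (hJ : IsParaquaternionicTriple J₁ J₂ J₃)
include hJ

theorem linearIndependent₁₂ [Nontrivial A] : LinearIndependent ℝ ![J₁, J₂] :=
  linearIndependent_pair_of_mul_eq_neg_mul (by rw [hJ.sq₁]; exact isUnit_one)
    (by rw [hJ.sq₂]; exact isUnit_one) (by rw [hJ.mul₁₂, hJ.mul₂₁, neg_neg])

theorem linearIndependent₁₃ [Nontrivial A] : LinearIndependent ℝ ![J₁, J₃] :=
  linearIndependent_pair_of_mul_eq_neg_mul (by rw [hJ.sq₁]; exact isUnit_one)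
    (by rw [hJ.sq₃]; exact isUnit_one.neg) (by rw [hJ.mul₁₃, hJ.mul₃₁, neg_neg])

theorem linearIndependent₂₃ [Nontrivial A] : LinearIndependent ℝ ![J₂, J₃] :=
  linearIndependent_pair_of_mul_eq_neg_mul (by rw [hJ.sq₂]; exact isUnit_one)
    (by rw [hJ.sq₃]; exact isUnit_one.neg) (by rw [hJ.mul₂₃, hJ.mul₃₂])

variable {T : A} (a₁ a₂ a₃ : ℝ)

theorem commutator₁ (hT : Commute T J₁) :
    (T + a₁ • J₁ + a₂ • J₂ + a₃ • J₃) * J₁ - J₁ * (T + a₁ • J₁ + a₂ • J₂ + a₃ • J₃) =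
      (-2 * a₃) • J₂ + (-2 * a₂) • J₃ := by
  simp only [add_mul, mul_add, smul_mul_assoc, mul_smul_comm, hT.eq, hJ.sq₁, hJ.mul₁₂, hJ.mul₂₁,
    hJ.mul₁₃, hJ.mul₃₁]
  module

theorem commutator₂ (hT : Commute T J₂) :
    (T + a₁ • J₁ + a₂ • J₂ + a₃ • J₃) * J₂ - J₂ * (T + a₁ • J₁ + a₂ • J₂ + a₃ • J₃) =
      (2 * a₃) • J₁ + (2 * a₁) • J₃ := by
  simp only [add_mul, mul_add, smul_mul_assoc, mul_smul_comm, hT.eq, hJ.sq₂, hJ.mul₁₂, hJ.mul₂₁,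
    hJ.mul₂₃, hJ.mul₃₂]
  module

theorem commutator₃ (hT : Commute T J₃) :
    (T + a₁ • J₁ + a₂ • J₂ + a₃ • J₃) * J₃ - J₃ * (T + a₁ • J₁ + a₂ • J₂ + a₃ • J₃) =
      (-2 * a₂) • J₁ + (2 * a₁) • J₂ := by
  simp only [add_mul, mul_add, smul_mul_assoc, mul_smul_comm, hT.eq, hJ.sq₃, hJ.mul₁₃, hJ.mul₃₁,
    hJ.mul₂₃, hJ.mul₃₂]
  module

end Algebra

end IsParaquaternionicTriple

section Defect

variable {V : Type*} [AddCommGroup V] [Module ℝ V]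

def coincidenceDefect (S : V →ₗ[ℝ] Module.End ℝ V) (X : V) :
    QuadraticMap ℝ (Module.End ℝ V) (Module.End ℝ V) :=
  LinearMap.BilinMap.toQuadraticMap <|
    LinearMap.mk₂ ℝ (fun u v => u * (S X * v - v * S X) + (S (u X) * v - v * S (u X)))
      (fun u₁ u₂ v => by simp only [add_mul, mul_add, LinearMap.add_apply, map_add]; abel)
      (fun c u v => by
        simp only [smul_mul_assoc, mul_smul_comm, LinearMap.smul_apply, map_smul]; module)
      (fun u v₁ v₂ => by simp only [add_mul, mul_add, mul_sub]; abel)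
      (fun c u v => by simp only [smul_mul_assoc, mul_smul_comm, smul_add, smul_sub, mul_sub])

theorem coincidenceDefect_apply (S : V →ₗ[ℝ] Module.End ℝ V) (X : V) (u : Module.End ℝ V) :
    coincidenceDefect S X u = u * (S X * u - u * S X) + (S (u X) * u - u * S (u X)) :=
  rfl

theorem coincidenceDefect_eq_zero_of_commute {S : V →ₗ[ℝ] Module.End ℝ V} {u : Module.End ℝ V}
    (h : ∀ Y, Commute (S Y) u) (X : V) : coincidenceDefect S X u = 0 := by
  rw [coincidenceDefect_apply, (h X).eq, (h (u X)).eq, sub_self, sub_self, mul_zero, add_zero]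

namespace IsParaquaternionicTriple

variable {J₁ J₂ J₃ : Module.End ℝ V} (hJ : IsParaquaternionicTriple J₁ J₂ J₃)
  {S : V →ₗ[ℝ] Module.End ℝ V} {S₀ : V → Module.End ℝ V} {s₁ s₂ s₃ : V →ₗ[ℝ] ℝ}
  (hS : ∀ X, S X = S₀ X + s₁ X • J₁ + s₂ X • J₂ + s₃ X • J₃)
include hJ hS

theorem coincidenceDefect₁ (hc : ∀ X, Commute (S₀ X) J₁) (X : V) :
    coincidenceDefect S X J₁ = (-2 * (s₂ X + s₃ (J₁ X))) • J₂ + (-2 * (s₃ X + s₂ (J₁ X))) • J₃ := by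
  rw [coincidenceDefect_apply, hS, hS, hJ.commutator₁ _ _ _ (hc _), hJ.commutator₁ _ _ _ (hc _)]
  simp only [mul_add, mul_smul_comm, hJ.mul₁₂, hJ.mul₁₃]
  module

theorem coincidenceDefect₂ (hc : ∀ X, Commute (S₀ X) J₂) (X : V) :
    coincidenceDefect S X J₂ = (2 * (s₃ (J₂ X) - s₁ X)) • J₁ + (2 * (s₁ (J₂ X) - s₃ X)) • J₃ := by
  rw [coincidenceDefect_apply, hS, hS, hJ.commutator₂ _ _ _ (hc _), hJ.commutator₂ _ _ _ (hc _)]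
  simp only [mul_add, mul_smul_comm, hJ.mul₂₁, hJ.mul₂₃]
  module

theorem coincidenceDefect₃ (hc : ∀ X, Commute (S₀ X) J₃) (X : V) :
    coincidenceDefect S X J₃ = (2 * (s₁ X - s₂ (J₃ X))) • J₁ + (2 * (s₂ X + s₁ (J₃ X))) • J₂ := by
  rw [coincidenceDefect_apply, hS, hS, hJ.commutator₃ _ _ _ (hc _), hJ.commutator₃ _ _ _ (hc _)]
  simp only [mul_add, mul_smul_comm, hJ.mul₃₁, hJ.mul₃₂]
  module

theorem eq_zero_of_coincidenceDefect_eq_zero (hc₁ : ∀ X, Commute (S₀ X) J₁)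
    (hc₂ : ∀ X, Commute (S₀ X) J₂) (hc₃ : ∀ X, Commute (S₀ X) J₃)
    (h : ∀ X, coincidenceDefect S X J₁ = 0 ∧ coincidenceDefect S X J₂ = 0 ∧
      coincidenceDefect S X J₃ = 0) :
    s₁ = 0 ∧ s₂ = 0 ∧ s₃ = 0 := by
  rcases subsingleton_or_nontrivial V with hV | hV
  · exact ⟨Subsingleton.elim _ _, Subsingleton.elim _ _, Subsingleton.elim _ _⟩
  have rel₁ : ∀ X, s₂ X + s₃ (J₁ X) = 0 ∧ s₃ X + s₂ (J₁ X) = 0 := fun X => by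
    have h₁ := (h X).1
    rw [hJ.coincidenceDefect₁ hS hc₁] at h₁
    obtain ⟨h₂, h₃⟩ := LinearIndependent.pair_iff.1 hJ.linearIndependent₂₃ _ _ h₁
    constructor <;> linarith
  have rel₂ : ∀ X, s₃ (J₂ X) = s₁ X ∧ s₁ (J₂ X) = s₃ X := fun X => by
    have h₂ := (h X).2.1
    rw [hJ.coincidenceDefect₂ hS hc₂] at h₂
    obtain ⟨h₁, h₃⟩ := LinearIndependent.pair_iff.1 hJ.linearIndependent₁₃ _ _ h₂
    constructor <;> linarith
  have rel₃ : ∀ X, s₁ X = s₂ (J₃ X) ∧ s₂ X + s₁ (J₃ X) = 0 := fun X => by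
    have h₃ := (h X).2.2
    rw [hJ.coincidenceDefect₃ hS hc₃] at h₃
    obtain ⟨h₁, h₂⟩ := LinearIndependent.pair_iff.1 hJ.linearIndependent₁₂ _ _ h₃
    constructor <;> linarith
  have h₁₃ : ∀ X, J₁ (J₃ X) = J₂ X := fun X => by rw [← Module.End.mul_apply, hJ.mul₁₃]
  have h₂₃ : ∀ X, J₂ (J₃ X) = -J₁ X := fun X => by rw [← Module.End.mul_apply, hJ.mul₂₃]; rfl
  have h₃₁ : ∀ X, J₃ (J₁ X) = -J₂ X := fun X => by rw [← Module.End.mul_apply, hJ.mul₃₁]; rfl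
  -- e.g. `s¹ = s² ∘ J₃ = -s³ ∘ J₁J₃ = -s³ ∘ J₂ = -s¹`
  refine ⟨LinearMap.ext fun X => ?_, LinearMap.ext fun X => ?_, LinearMap.ext fun X => ?_⟩ <;>
    rw [LinearMap.zero_apply]
  · have := (rel₁ (J₃ X)).1
    rw [h₁₃] at this
    linarith [(rel₃ X).1, (rel₂ X).1]
  · have := (rel₂ (J₃ X)).1
    rw [h₂₃, map_neg] at this
    linarith [(rel₃ X).2, (rel₁ X).1]
  · have := (rel₃ (J₁ X)).2
    rw [h₃₁, map_neg] at this
    linarith [(rel₁ X).2, (rel₂ X).2]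

end IsParaquaternionicTriple

end Defect

/-- Corollary 3.3 (algebraic core): for a paraquaternionic triple `(J₁, J₂, J₃)` on a real
vector space `V` and a linear map `S : V → End ℝ V` decomposing as
`S_X = S⁰_X + s¹(X)J₁ + s²(X)J₂ + s³(X)J₃` with `S⁰_X` commuting with each `Jₐ`,
the following are equivalent:
(i) `J ∘ [S_X, J] = −[S_{JX}, J]` for every `J = c₁J₁ + c₂J₂ + c₃J₃` with
`c₁² + c₂² − c₃² = −1`;
(ii) `s¹ = s² = s³ = 0`;
(iii) `P ∘ [S_X, P] = −[S_{PX}, P]` for every `P = b₁J₁ + b₂J₂ + b₃J₃` with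
`b₁² + b₂² − b₃² = 1`. -/
theorem twistor_reflector_I2_coincide_iff
    {V : Type*} [AddCommGroup V] [Module ℝ V]
    (J1 J2 J3 : Module.End ℝ V)
    (h1 : J1 * J1 = 1) (h2 : J2 * J2 = 1) (h3 : J3 * J3 = -1)
    (h12 : J1 * J2 = J3) (h21 : J2 * J1 = -J3)
    (S : V →ₗ[ℝ] Module.End ℝ V)
    (S0 : V → Module.End ℝ V) (s1 s2 s3 : V →ₗ[ℝ] ℝ)
    (hS : ∀ X : V, S X = S0 X + s1 X • J1 + s2 X • J2 + s3 X • J3)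
    (hc1 : ∀ X : V, Commute (S0 X) J1) (hc2 : ∀ X : V, Commute (S0 X) J2)
    (hc3 : ∀ X : V, Commute (S0 X) J3) :
    List.TFAE
      [ (∀ (X : V) (J : Module.End ℝ V),
          (∃ c1 c2 c3 : ℝ, c1 ^ 2 + c2 ^ 2 - c3 ^ 2 = -1 ∧
            J = c1 • J1 + c2 • J2 + c3 • J3) →
          J * (S X * J - J * S X) = -(S (J X) * J - J * S (J X))),
        (s1 = 0 ∧ s2 = 0 ∧ s3 = 0),
        (∀ (X : V) (P : Module.End ℝ V),
          (∃ b1 b2 b3 : ℝ, b1 ^ 2 + b2 ^ 2 - b3 ^ 2 = 1 ∧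
            P = b1 • J1 + b2 • J2 + b3 • J3) →
          P * (S X * P - P * S X) = -(S (P X) * P - P * S (P X))) ] := by
  have hJ : IsParaquaternionicTriple J1 J2 J3 := ⟨h1, h2, h3, h12, h21⟩
  have hdefect : ∀ X u, u * (S X * u - u * S X) = -(S (u X) * u - u * S (u X)) ↔
      coincidenceDefect S X u = 0 := fun X u => by
    rw [coincidenceDefect_apply, eq_neg_iff_add_eq_zero]
  have of_imaginary_eq_zero : s1 = 0 ∧ s2 = 0 ∧ s3 = 0 →
      ∀ X (c1 c2 c3 : ℝ), coincidenceDefect S X (c1 • J1 + c2 • J2 + c3 • J3) = 0 := by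
    rintro ⟨rfl, rfl, rfl⟩ X c1 c2 c3
    refine coincidenceDefect_eq_zero_of_commute (fun Y => ?_) X
    simpa [hS] using (((hc1 Y).smul_right c1).add_right ((hc2 Y).smul_right c2)).add_right
      ((hc3 Y).smul_right c3)
  tfae_have 2 → 1 := by
    rintro hs X _ ⟨c1, c2, c3, -, rfl⟩
    exact (hdefect _ _).2 (of_imaginary_eq_zero hs X c1 c2 c3)
  tfae_have 2 → 3 := by
    rintro hs X _ ⟨b1, b2, b3, -, rfl⟩
    exact (hdefect _ _).2 (of_imaginary_eq_zero hs X b1 b2 b3)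
  tfae_have 1 → 2 := fun h => hJ.eq_zero_of_coincidenceDefect_eq_zero hS hc1 hc2 hc3 fun X =>
    (coincidenceDefect S X).eq_zero_of_forall_sq_add_sq_sub_sq_eq_neg_one fun c1 c2 c3 hc =>
      (hdefect _ _).1 (h X _ ⟨c1, c2, c3, hc, rfl⟩)
  tfae_have 3 → 2 := fun h => hJ.eq_zero_of_coincidenceDefect_eq_zero hS hc1 hc2 hc3 fun X =>
    (coincidenceDefect S X).eq_zero_of_forall_sq_add_sq_sub_sq_eq_one fun b1 b2 b3 hb =>
      (hdefect _ _).1 (h X _ ⟨b1, b2, b3, hb, rfl⟩)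
  tfae_finish
end

section
/- Let V be a real vector space of dimension 4n (n ≥ 1) with a paraquaternionic triple (J₁, J₂, J₃), let S : V → End_ℝ(V) be an ℝ-linear map admitting a decomposition S_X = S⁰_X + s¹(X)·J₁ + s²(X)·J₂ + s³(X)·J₃ with S⁰_X commuting with each Jₐ, and set D(X,Y) := S_X(Y) − S_Y(X). Then the following are equivalent: (i) s¹(J₁X) = s²(J₂X) = s³(J₃X) for all X ∈ V; (ii) D^{0,2}_K = 0 for every K = c₁J₁ + c₂J₂ + c₃J₃ with c₁² + c₂² − c₃² = −1; (iii) D^{0,2}_K = 0 for every K = b₁J₁ + b₂J₂ + b₃J₃ with b₁² + b₂² − b₃² = 1. (This is the algebraic core of Corollary 3.4: the structures I₁^∇, I₁^{∇'} on the twistor space, equivalently P₁^∇, P₁^{∇'} on the reflector space, coincide if and only if the (0,2)-parts of the torsions of the two connections coincide.) -/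
/-!
Write `4 D^{0,2}_K(X,Y) = F_X Y - F_Y X` with `F_X = ε S_X - K S_X K + [S_{KX}, K]`.
The part `S⁰` commuting with `K` contributes nothing to `F` once `K² = ε`, and for
`K = c₁J₁ + c₂J₂ + c₃J₃` the paraquaternionic part gives `F_X = 2 (g₁J₁ + g₂J₂ + g₃J₃)`, with
`g(X)` orthogonal to `c` for the form `q(c) = c₁² + c₂² - c₃²`. Condition (i) makes `g` vanish
identically. Conversely, if `F_X Y = F_Y X` for all `Y`, then `F_X` maps `V` into the span of
`J₁X, J₂X, J₃X`; as `F_X² = 4 q(g(X))` and `dim V ≥ 4`, `g(X)` is isotropic, and for timelike `c`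
the orthogonal complement of `c` is definite, so `g = 0`. At `K = J₃` and `K = ¾ J₁ + ⁵⁄₄ J₃` this
gives back (i). Finally `K ↦ 4 D^{0,2}_K - K² D` is quadratic in `K`, so its vanishing at the
spacelike `J₁, ⁵⁄₄ J₁ ± ¾ J₃` forces its vanishing at these two timelike points.
-/

/-- The `(0,2)`-part of an (alternating bilinear) map `B : V × V → V` with respect to an
endomorphism `K` with `K ∘ K = ε • id`:
`B^{0,2}_K(X,Y) = (1/4)(ε B(X,Y) + B(KX,KY) − K B(KX,Y) − K B(X,KY))`. -/
noncomputable def part02 {V : Type*} [AddCommGroup V] [Module ℝ V]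
    (ε : ℝ) (K : Module.End ℝ V) (B : V → V → V) (X Y : V) : V :=
  (4⁻¹ : ℝ) • (ε • B X Y + B (K X) (K Y) - K (B (K X) Y) - K (B X (K Y)))

section

open Module

theorem finrank_le_card_of_mul_self_eq_smul_one {K V ι : Type*} [Field K] [AddCommGroup V]
    [Module K V] [FiniteDimensional K V] [Fintype ι] {A : Module.End K V} {r : K}
    (hA : A * A = r • 1) (hr : r ≠ 0) (v : ι → V) (h : ∀ Y, A Y ∈ Submodule.span K (Set.range v)) :
    finrank K V ≤ Fintype.card ι := by
  have htop : Submodule.span K (Set.range v) = ⊤ := Submodule.eq_top_iff'.mpr fun Y => by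
    have hY : A (r⁻¹ • A Y) = Y := by
      rw [map_smul, ← Module.End.mul_apply, hA]
      simp [smul_smul, inv_mul_cancel₀ hr]
    exact hY ▸ h _
  have hcard := finrank_range_le_card (R := K) v
  rwa [Set.finrank, htop, finrank_top] at hcard

theorem eq_zero_of_isotropic_of_orthogonal_timelike {c1 c2 c3 g1 g2 g3 : ℝ}
    (hc : c1 ^ 2 + c2 ^ 2 - c3 ^ 2 < 0) (horth : c1 * g1 + c2 * g2 - c3 * g3 = 0)
    (hiso : g1 ^ 2 + g2 ^ 2 - g3 ^ 2 = 0) : g1 = 0 ∧ g2 = 0 ∧ g3 = 0 := by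
  have hlagrange : (c3 ^ 2 - c1 ^ 2 - c2 ^ 2) * (g1 ^ 2 + g2 ^ 2) = -(c1 * g2 - c2 * g1) ^ 2 := by
    linear_combination c3 ^ 2 * hiso - (c1 * g1 + c2 * g2 + c3 * g3) * horth
  have hg : g1 ^ 2 + g2 ^ 2 = 0 := by
    nlinarith [sq_nonneg (c1 * g2 - c2 * g1), sq_nonneg g1, sq_nonneg g2]
  have hg1 : g1 = 0 := by nlinarith [sq_nonneg g1, sq_nonneg g2]
  have hg2 : g2 = 0 := by nlinarith [sq_nonneg g1, sq_nonneg g2]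
  exact ⟨hg1, hg2, pow_eq_zero_iff two_ne_zero |>.mp (by linarith)⟩

variable {V : Type*} [AddCommGroup V] [Module ℝ V]

structure IsParaquaternionic (J1 J2 J3 : Module.End ℝ V) : Prop where
  sq₁ : J1 * J1 = 1
  sq₂ : J2 * J2 = 1
  sq₃ : J3 * J3 = -1
  mul₁₂ : J1 * J2 = J3
  mul₂₁ : J2 * J1 = -J3

namespace IsParaquaternionic

variable {J1 J2 J3 : Module.End ℝ V}

theorem mul₁₃ (hJ : IsParaquaternionic J1 J2 J3) : J1 * J3 = J2 := by
  rw [← hJ.mul₁₂, ← mul_assoc, hJ.sq₁, one_mul]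

theorem mul₃₂ (hJ : IsParaquaternionic J1 J2 J3) : J3 * J2 = J1 := by
  rw [← hJ.mul₁₂, mul_assoc, hJ.sq₂, mul_one]

theorem mul₃₁ (hJ : IsParaquaternionic J1 J2 J3) : J3 * J1 = -J2 := by
  rw [← hJ.mul₁₂, mul_assoc, hJ.mul₂₁, mul_neg, hJ.mul₁₃]

theorem mul₂₃ (hJ : IsParaquaternionic J1 J2 J3) : J2 * J3 = -J1 := by
  rw [← hJ.mul₁₂, ← mul_assoc, hJ.mul₂₁, neg_mul, hJ.mul₃₂]

theorem comb_mul_self (hJ : IsParaquaternionic J1 J2 J3) (a b c : ℝ) :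
    (a • J1 + b • J2 + c • J3) * (a • J1 + b • J2 + c • J3) = (a ^ 2 + b ^ 2 - c ^ 2) • 1 := by
  simp only [add_mul, mul_add, smul_mul_assoc, mul_smul_comm, hJ.sq₁, hJ.sq₂, hJ.sq₃, hJ.mul₁₂,
    hJ.mul₂₁, hJ.mul₁₃, hJ.mul₃₁, hJ.mul₂₃, hJ.mul₃₂]
  module

theorem sq_add_sq_sub_sq_eq_zero_of_forall_mem_span [FiniteDimensional ℝ V]
    (hJ : IsParaquaternionic J1 J2 J3) (hdim : 3 < finrank ℝ V) {a b c : ℝ} {X : V}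
    (h : ∀ Y, (a • J1 + b • J2 + c • J3) Y ∈ Submodule.span ℝ (Set.range ![J1 X, J2 X, J3 X])) :
    a ^ 2 + b ^ 2 - c ^ 2 = 0 := by
  by_contra hq
  have := finrank_le_card_of_mul_self_eq_smul_one (hJ.comb_mul_self a b c) hq _ h
  simp only [Fintype.card_fin] at this
  omega

end IsParaquaternionic

def torsion (A : V → Module.End ℝ V) (X Y : V) : V := A X Y - A Y X

def part02Op (ε : ℝ) (K : Module.End ℝ V) (A : V → Module.End ℝ V) (X : V) : Module.End ℝ V :=
  ε • A X - K * A X * K + (A (K X) * K - K * A (K X))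

theorem part02_torsion (ε : ℝ) (K : Module.End ℝ V) (A : V → Module.End ℝ V) (X Y : V) :
    part02 ε K (torsion A) X Y = (4⁻¹ : ℝ) • (part02Op ε K A X Y - part02Op ε K A Y X) := by
  simp only [part02, torsion, part02Op, LinearMap.sub_apply, LinearMap.add_apply,
    LinearMap.smul_apply, Module.End.mul_apply, map_sub]
  module

theorem part02Op_eq_of_commute {ε : ℝ} {K : Module.End ℝ V} (hK : K * K = ε • 1)
    {A A₀ B : V → Module.End ℝ V} (hA : ∀ X, A X = A₀ X + B X)
    (hA₀ : ∀ X, Commute (A₀ X) K) (X : V) : part02Op ε K A X = part02Op ε K B X := by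
  have hsandwich : K * A₀ X * K = ε • A₀ X := by
    rw [← (hA₀ X).eq, mul_assoc, hK, mul_smul_comm, mul_one]
  simp only [part02Op, hA, mul_add, add_mul, hsandwich, (hA₀ (K X)).eq]
  module

theorem part02_torsion_eq_of_commute {ε : ℝ} {K : Module.End ℝ V} (hK : K * K = ε • 1)
    {A A₀ B : V → Module.End ℝ V} (hA : ∀ X, A X = A₀ X + B X)
    (hA₀ : ∀ X, Commute (A₀ X) K) : part02 ε K (torsion A) = part02 ε K (torsion B) := by
  ext X Y
  simp only [part02_torsion, part02Op_eq_of_commute hK hA hA₀]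

-- For fixed `X, Y`, `K ↦ 4 part02 ε K B X Y - ε B X Y` is a quadratic form in `K`: the identities
-- below are its polarization at `K` and `L`.
theorem part02_neg_one_eq_zero_of_part02_one_eq_zero (S : V →ₗ[ℝ] Module.End ℝ V)
    (K L : Module.End ℝ V) (h₀ : ∀ X Y, part02 1 K (torsion S) X Y = 0)
    (hplus : ∀ X Y, part02 1 ((5 / 4 : ℝ) • K + (3 / 4 : ℝ) • L) (torsion S) X Y = 0)
    (hminus : ∀ X Y, part02 1 ((5 / 4 : ℝ) • K - (3 / 4 : ℝ) • L) (torsion S) X Y = 0) :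
    (∀ X Y, part02 (-1) L (torsion S) X Y = 0) ∧
      ∀ X Y, part02 (-1) ((3 / 4 : ℝ) • K + (5 / 4 : ℝ) • L) (torsion S) X Y = 0 := by
  constructor <;> intro X Y
  · have e : part02 (-1) L (torsion S) X Y =
        (8 / 9 : ℝ) • (part02 1 ((5 / 4 : ℝ) • K + (3 / 4 : ℝ) • L) (torsion S) X Y
          + part02 1 ((5 / 4 : ℝ) • K - (3 / 4 : ℝ) • L) (torsion S) X Y)
        - (25 / 9 : ℝ) • part02 1 K (torsion S) X Y := by
      simp only [part02, torsion, LinearMap.add_apply, LinearMap.sub_apply, LinearMap.smul_apply,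
        map_add, map_sub, map_smul]
      module
    rw [e, h₀, hplus, hminus]
    simp
  · have e : part02 (-1) ((3 / 4 : ℝ) • K + (5 / 4 : ℝ) • L) (torsion S) X Y =
        (17 / 9 : ℝ) • part02 1 ((5 / 4 : ℝ) • K + (3 / 4 : ℝ) • L) (torsion S) X Y
        + (8 / 9 : ℝ) • part02 1 ((5 / 4 : ℝ) • K - (3 / 4 : ℝ) • L) (torsion S) X Y
        - (34 / 9 : ℝ) • part02 1 K (torsion S) X Y := by
      simp only [part02, torsion, LinearMap.add_apply, LinearMap.sub_apply, LinearMap.smul_apply,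
        map_add, map_sub, map_smul]
      module
    rw [e, h₀, hplus, hminus]
    simp

def pqPart (J1 J2 J3 : Module.End ℝ V) (s1 s2 s3 : V →ₗ[ℝ] ℝ) (X : V) : Module.End ℝ V :=
  s1 X • J1 + s2 X • J2 + s3 X • J3

section Coefficients

variable (s1 s2 s3 : V →ₗ[ℝ] ℝ) (c1 c2 c3 : ℝ) (X Z : V)

/-- With `Z = K X`, these are the coordinates of `½ part02Op` on `pqPart`:
`g = q(c) a - B(a, c) c + t ⊠ c` for `a = s(X)`, `t = s(Z)`, `B` the polar form of `q`, and `⊠` the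
product with `[J_a, J_b] = 2 J_a ⊠ J_b`. -/
def part02Coeff₁ : ℝ :=
  (c2 ^ 2 - c3 ^ 2) * s1 X - c1 * c2 * s2 X + c1 * c3 * s3 X + c2 * s3 Z - c3 * s2 Z

def part02Coeff₂ : ℝ :=
  -(c1 * c2) * s1 X + (c1 ^ 2 - c3 ^ 2) * s2 X + c2 * c3 * s3 X + c3 * s1 Z - c1 * s3 Z

def part02Coeff₃ : ℝ :=
  -(c1 * c3) * s1 X - c2 * c3 * s2 X + (c1 ^ 2 + c2 ^ 2) * s3 X + c2 * s1 Z - c1 * s2 Z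

theorem part02Coeff_orthogonal :
    c1 * part02Coeff₁ s1 s2 s3 c1 c2 c3 X Z + c2 * part02Coeff₂ s1 s2 s3 c1 c2 c3 X Z
      - c3 * part02Coeff₃ s1 s2 s3 c1 c2 c3 X Z = 0 := by
  simp only [part02Coeff₁, part02Coeff₂, part02Coeff₃]
  ring

end Coefficients

theorem part02Op_pqPart {J1 J2 J3 : Module.End ℝ V} (hJ : IsParaquaternionic J1 J2 J3)
    (s1 s2 s3 : V →ₗ[ℝ] ℝ) {ε c1 c2 c3 : ℝ} (hε : c1 ^ 2 + c2 ^ 2 - c3 ^ 2 = ε)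
    {K : Module.End ℝ V} (hK : K = c1 • J1 + c2 • J2 + c3 • J3) (X : V) :
    part02Op ε K (pqPart J1 J2 J3 s1 s2 s3) X =
      (2 : ℝ) • (part02Coeff₁ s1 s2 s3 c1 c2 c3 X (K X) • J1
        + part02Coeff₂ s1 s2 s3 c1 c2 c3 X (K X) • J2
        + part02Coeff₃ s1 s2 s3 c1 c2 c3 X (K X) • J3) := by
  subst hε hK
  simp only [part02Op, pqPart, part02Coeff₁, part02Coeff₂, part02Coeff₃, add_mul, mul_add,
    sub_mul, smul_mul_assoc, mul_smul_comm, hJ.sq₁, hJ.sq₂, hJ.sq₃, hJ.mul₁₂,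
    hJ.mul₂₁, hJ.mul₁₃, hJ.mul₃₁, hJ.mul₂₃, hJ.mul₃₂, neg_mul, one_mul]
  module

theorem part02Coeff_eq_zero_of_part02_eq_zero [FiniteDimensional ℝ V]
    {J1 J2 J3 : Module.End ℝ V} (hJ : IsParaquaternionic J1 J2 J3) (hdim : 3 < finrank ℝ V)
    {s1 s2 s3 : V →ₗ[ℝ] ℝ} {ε c1 c2 c3 : ℝ} (hε : c1 ^ 2 + c2 ^ 2 - c3 ^ 2 = ε) (hneg : ε < 0)
    {K : Module.End ℝ V} (hK : K = c1 • J1 + c2 • J2 + c3 • J3)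
    (h : ∀ X Y, part02 ε K (torsion (pqPart J1 J2 J3 s1 s2 s3)) X Y = 0) (X : V) :
    part02Coeff₁ s1 s2 s3 c1 c2 c3 X (K X) = 0 ∧ part02Coeff₂ s1 s2 s3 c1 c2 c3 X (K X) = 0 ∧
      part02Coeff₃ s1 s2 s3 c1 c2 c3 X (K X) = 0 := by
  refine eq_zero_of_isotropic_of_orthogonal_timelike (hε ▸ hneg) (part02Coeff_orthogonal ..)
    (hJ.sq_add_sq_sub_sq_eq_zero_of_forall_mem_span hdim (X := X) fun Y => ?_)
  have hsymm := h X Y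
  rw [part02_torsion, smul_eq_zero_iff_right (by norm_num), sub_eq_zero,
    part02Op_pqPart hJ s1 s2 s3 hε hK, part02Op_pqPart hJ s1 s2 s3 hε hK, LinearMap.smul_apply,
    LinearMap.smul_apply, smul_right_inj two_ne_zero] at hsymm
  rw [hsymm]
  simp only [LinearMap.add_apply, LinearMap.smul_apply]
  refine add_mem (add_mem ?_ ?_) ?_ <;>
    exact Submodule.smul_mem _ _ (Submodule.subset_span (by simp))

theorem part02_torsion_pqPart_eq_zero {J1 J2 J3 : Module.End ℝ V}
    (hJ : IsParaquaternionic J1 J2 J3) {s1 s2 s3 : V →ₗ[ℝ] ℝ}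
    (hs : ∀ X, s1 (J1 X) = s2 (J2 X) ∧ s2 (J2 X) = s3 (J3 X)) (c1 c2 c3 : ℝ) (X Y : V) :
    part02 (c1 ^ 2 + c2 ^ 2 - c3 ^ 2) (c1 • J1 + c2 • J2 + c3 • J3)
      (torsion (pqPart J1 J2 J3 s1 s2 s3)) X Y = 0 := by
  have a11 : ∀ W, J1 (J1 W) = W := LinearMap.congr_fun hJ.sq₁
  have a22 : ∀ W, J2 (J2 W) = W := LinearMap.congr_fun hJ.sq₂
  have a33 : ∀ W, J3 (J3 W) = -W := LinearMap.congr_fun hJ.sq₃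
  have a12 : ∀ W, J1 (J2 W) = J3 W := LinearMap.congr_fun hJ.mul₁₂
  have a21 : ∀ W, J2 (J1 W) = -J3 W := LinearMap.congr_fun hJ.mul₂₁
  have a13 : ∀ W, J1 (J3 W) = J2 W := LinearMap.congr_fun hJ.mul₁₃
  have a23 : ∀ W, J2 (J3 W) = -J1 W := LinearMap.congr_fun hJ.mul₂₃
  have a32 : ∀ W, J3 (J2 W) = J1 W := LinearMap.congr_fun hJ.mul₃₂
  have a31 : ∀ W, J3 (J1 W) = -J2 W := LinearMap.congr_fun hJ.mul₃₁
  have hop : ∀ X, part02Op (c1 ^ 2 + c2 ^ 2 - c3 ^ 2) (c1 • J1 + c2 • J2 + c3 • J3)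
      (pqPart J1 J2 J3 s1 s2 s3) X = 0 := by
    intro X
    obtain ⟨h1, h2⟩ := hs X
    obtain ⟨h11, h12⟩ := hs (J1 X)
    obtain ⟨h21, h22⟩ := hs (J2 X)
    obtain ⟨h31, h32⟩ := hs (J3 X)
    simp only [a11, a21, a31, a12, a22, a32, a13, a23, a33, map_neg] at h11 h12 h21 h22 h31 h32
    have r22 : s2 (J2 X) = s1 (J1 X) := by linarith
    have r33 : s3 (J3 X) = s1 (J1 X) := by linarith
    have r23 : s2 (J3 X) = -s1 X := by linarith
    have r32 : s3 (J2 X) = -s1 X := by linarith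
    have r13 : s1 (J3 X) = s2 X := by linarith
    have r31 : s3 (J1 X) = s2 X := by linarith
    have r21 : s2 (J1 X) = s3 X := by linarith
    have r12 : s1 (J2 X) = -s3 X := by linarith
    rw [part02Op_pqPart hJ s1 s2 s3 rfl rfl]
    simp only [part02Coeff₁, part02Coeff₂, part02Coeff₃, LinearMap.add_apply, LinearMap.smul_apply,
      map_add, map_smul, smul_eq_mul, r22, r33, r23, r32, r13, r31, r21, r12]
    module
  rw [part02_torsion, hop, hop]
  simp

theorem pq_condition_of_part02_eq_zero [FiniteDimensional ℝ V] {J1 J2 J3 : Module.End ℝ V}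
    (hJ : IsParaquaternionic J1 J2 J3) (hdim : 3 < finrank ℝ V) {s1 s2 s3 : V →ₗ[ℝ] ℝ}
    (h₃ : ∀ X Y, part02 (-1) J3 (torsion (pqPart J1 J2 J3 s1 s2 s3)) X Y = 0)
    (h₁₃ : ∀ X Y, part02 (-1) ((3 / 4 : ℝ) • J1 + (5 / 4 : ℝ) • J3)
      (torsion (pqPart J1 J2 J3 s1 s2 s3)) X Y = 0) (X : V) :
    s1 (J1 X) = s2 (J2 X) ∧ s2 (J2 X) = s3 (J3 X) := by
  have hJ3 : ∀ W, s2 (J3 W) = -s1 W ∧ s1 (J3 W) = s2 W := by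
    intro W
    obtain ⟨e1, e2, -⟩ := part02Coeff_eq_zero_of_part02_eq_zero hJ hdim (c1 := 0) (c2 := 0)
      (c3 := 1) (by norm_num) (by norm_num) (by simp) h₃ W
    simp only [part02Coeff₁, part02Coeff₂] at e1 e2
    constructor <;> linarith
  have hJ1 : ∀ W, s2 (J1 W) = s3 W := by
    intro W
    obtain ⟨-, -, e3⟩ := part02Coeff_eq_zero_of_part02_eq_zero hJ hdim (c1 := 3 / 4) (c2 := 0)
      (c3 := 5 / 4) (by norm_num) (by norm_num) (by simp) h₁₃ W
    simp only [part02Coeff₃, LinearMap.add_apply, LinearMap.smul_apply, map_add, map_smul,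
      smul_eq_mul, (hJ3 W).1] at e3
    linarith
  have a32 : J3 (J2 X) = J1 X := LinearMap.congr_fun hJ.mul₃₂ X
  have a13 : J1 (J3 X) = J2 X := LinearMap.congr_fun hJ.mul₁₃ X
  exact ⟨a32 ▸ (hJ3 (J2 X)).2, a13 ▸ hJ1 (J3 X)⟩

theorem part02_torsion_eq_part02_torsion_pqPart {J1 J2 J3 : Module.End ℝ V}
    (hJ : IsParaquaternionic J1 J2 J3) {S S0 : V → Module.End ℝ V} {s1 s2 s3 : V →ₗ[ℝ] ℝ}
    (hS : ∀ X, S X = S0 X + s1 X • J1 + s2 X • J2 + s3 X • J3)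
    (hc1 : ∀ X, Commute (S0 X) J1) (hc2 : ∀ X, Commute (S0 X) J2)
    (hc3 : ∀ X, Commute (S0 X) J3) {ε c1 c2 c3 : ℝ} (hε : c1 ^ 2 + c2 ^ 2 - c3 ^ 2 = ε)
    {K : Module.End ℝ V} (hK : K = c1 • J1 + c2 • J2 + c3 • J3) :
    part02 ε K (torsion S) = part02 ε K (torsion (pqPart J1 J2 J3 s1 s2 s3)) := by
  subst hK
  exact part02_torsion_eq_of_commute (hε ▸ hJ.comb_mul_self c1 c2 c3)
    (fun X => by rw [hS, pqPart]; abel)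
    fun X => (((hc1 X).smul_right c1).add_right ((hc2 X).smul_right c2)).add_right
      ((hc3 X).smul_right c3)

end

/-- Corollary 3.4 (algebraic core): for a paraquaternionic triple `(J₁, J₂, J₃)` on a real
vector space `V` of dimension `4n`, `n ≥ 1`, and `S : V → End ℝ V` linear with decomposition
`S_X = S⁰_X + s¹(X)J₁ + s²(X)J₂ + s³(X)J₃`, `S⁰_X` commuting with each `Jₐ`, setting
`D(X,Y) := S_X Y − S_Y X`, the following are equivalent:
(i) `s¹(J₁X) = s²(J₂X) = s³(J₃X)` for all `X`;
(ii) `D^{0,2}_K = 0` for every `K = c₁J₁ + c₂J₂ + c₃J₃` with `c₁² + c₂² − c₃² = −1`;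
(iii) `D^{0,2}_K = 0` for every `K = b₁J₁ + b₂J₂ + b₃J₃` with `b₁² + b₂² − b₃² = 1`. -/
theorem torsion_02_parts_coincide_iff
    {V : Type*} [AddCommGroup V] [Module ℝ V] [FiniteDimensional ℝ V]
    (n : ℕ) (hn : 1 ≤ n) (hdim : Module.finrank ℝ V = 4 * n)
    (J1 J2 J3 : Module.End ℝ V)
    (h1 : J1 * J1 = 1) (h2 : J2 * J2 = 1) (h3 : J3 * J3 = -1)
    (h12 : J1 * J2 = J3) (h21 : J2 * J1 = -J3)
    (S : V →ₗ[ℝ] Module.End ℝ V)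
    (S0 : V → Module.End ℝ V) (s1 s2 s3 : V →ₗ[ℝ] ℝ)
    (hS : ∀ X : V, S X = S0 X + s1 X • J1 + s2 X • J2 + s3 X • J3)
    (hc1 : ∀ X : V, Commute (S0 X) J1) (hc2 : ∀ X : V, Commute (S0 X) J2)
    (hc3 : ∀ X : V, Commute (S0 X) J3)
    (D : V → V → V) (hD : ∀ X Y : V, D X Y = S X Y - S Y X) :
    List.TFAE
      [ (∀ X : V, s1 (J1 X) = s2 (J2 X) ∧ s2 (J2 X) = s3 (J3 X)),
        (∀ K : Module.End ℝ V,
          (∃ c1 c2 c3 : ℝ, c1 ^ 2 + c2 ^ 2 - c3 ^ 2 = -1 ∧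
            K = c1 • J1 + c2 • J2 + c3 • J3) →
          ∀ X Y : V, part02 (-1) K D X Y = 0),
        (∀ K : Module.End ℝ V,
          (∃ b1 b2 b3 : ℝ, b1 ^ 2 + b2 ^ 2 - b3 ^ 2 = 1 ∧
            K = b1 • J1 + b2 • J2 + b3 • J3) →
          ∀ X Y : V, part02 1 K D X Y = 0) ] := by
  have hJ : IsParaquaternionic J1 J2 J3 := ⟨h1, h2, h3, h12, h21⟩
  obtain rfl : D = torsion S := funext fun X => funext (hD X)
  have hpq {ε c1 c2 c3 : ℝ} (hε : c1 ^ 2 + c2 ^ 2 - c3 ^ 2 = ε) {K : Module.End ℝ V}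
      (hK : K = c1 • J1 + c2 • J2 + c3 • J3) :=
    part02_torsion_eq_part02_torsion_pqPart hJ hS hc1 hc2 hc3 hε hK
  have hsuff (ε : ℝ) (hs : ∀ X, s1 (J1 X) = s2 (J2 X) ∧ s2 (J2 X) = s3 (J3 X))
      (K : Module.End ℝ V) :
      (∃ c1 c2 c3 : ℝ, c1 ^ 2 + c2 ^ 2 - c3 ^ 2 = ε ∧ K = c1 • J1 + c2 • J2 + c3 • J3) →
      ∀ X Y, part02 ε K (torsion S) X Y = 0 := by
    rintro ⟨c1, c2, c3, hε, rfl⟩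
    rw [hpq hε rfl, ← hε]
    exact part02_torsion_pqPart_eq_zero hJ hs c1 c2 c3
  have hnec (h₃ : ∀ X Y, part02 (-1) J3 (torsion S) X Y = 0)
      (h₁₃ : ∀ X Y, part02 (-1) ((3 / 4 : ℝ) • J1 + (5 / 4 : ℝ) • J3) (torsion S) X Y = 0) :
      ∀ X, s1 (J1 X) = s2 (J2 X) ∧ s2 (J2 X) = s3 (J3 X) := by
    refine pq_condition_of_part02_eq_zero hJ (by omega) ?_ ?_
    · rwa [← hpq (ε := -1) (c1 := 0) (c2 := 0) (c3 := 1) (by norm_num) (by simp)]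
    · rwa [← hpq (ε := -1) (c1 := 3 / 4) (c2 := 0) (c3 := 5 / 4) (by norm_num) (by simp)]
  tfae_have 1 → 2 := hsuff (-1)
  tfae_have 1 → 3 := hsuff 1
  tfae_have 2 → 1 := fun h =>
    hnec (h J3 ⟨0, 0, 1, by norm_num, by simp⟩) (h _ ⟨3 / 4, 0, 5 / 4, by norm_num, by simp⟩)
  tfae_have 3 → 1 := fun h =>
    (part02_neg_one_eq_zero_of_part02_one_eq_zero S J1 J3
      (h J1 ⟨1, 0, 0, by norm_num, by simp⟩) (h _ ⟨5 / 4, 0, 3 / 4, by norm_num, by simp⟩)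
      (h _ ⟨5 / 4, 0, -(3 / 4), by norm_num, by simp [sub_eq_add_neg]⟩)).elim hnec
  tfae_finish
end

section
/- Let V be a real vector space with a paraquaternionic triple (J₁, J₂, J₃) and let B : V × V → V be an alternating ℝ-bilinear map. Then B^{0,2}_K = 0 for every K = c₁J₁ + c₂J₂ + c₃J₃ with c₁² + c₂² − c₃² = −1 if and only if B^{0,2}_K = 0 for every K = b₁J₁ + b₂J₂ + b₃J₃ with b₁² + b₂² − b₃² = 1. (This is Lemma 3.1 of the paper, applied pointwise: vanishing of the (0,2)-part of a TM-valued 2-form with respect to all complex structures of the twistor space is equivalent to its vanishing with respect to all paracomplex structures of the reflector space.) -/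
/-!
For `K = c₁J₁ + c₂J₂ + c₃J₃` and `ε = c₁² + c₂² − c₃²`, the vector `4 B^{0,2}_K(X,Y)` is a
quadratic form in `(c₁, c₂, c₃)` with coefficients in `V`. A ternary quadratic form vanishing
on either of the hyperboloids `c₁² + c₂² − c₃² = ±1` vanishes identically (six well-chosen
points on the hyperboloid already determine its six coefficients), so both conditions say
that this form is zero.
-/

section TernaryQuad

variable {V : Type*} [AddCommGroup V] [Module ℝ V]

def ternaryQuad (a₁₁ a₂₂ a₃₃ a₁₂ a₁₃ a₂₃ : V) (c₁ c₂ c₃ : ℝ) : V :=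
  c₁ ^ 2 • a₁₁ + c₂ ^ 2 • a₂₂ + c₃ ^ 2 • a₃₃ + (c₁ * c₂) • a₁₂ + (c₁ * c₃) • a₁₃
    + (c₂ * c₃) • a₂₃

variable {a₁₁ a₂₂ a₃₃ a₁₂ a₁₃ a₂₃ : V}

theorem ternaryQuad_eq_zero_of_forall_eq_neg_one
    (h : ∀ c₁ c₂ c₃ : ℝ, c₁ ^ 2 + c₂ ^ 2 - c₃ ^ 2 = -1 →
      ternaryQuad a₁₁ a₂₂ a₃₃ a₁₂ a₁₃ a₂₃ c₁ c₂ c₃ = 0)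
    (c₁ c₂ c₃ : ℝ) : ternaryQuad a₁₁ a₂₂ a₃₃ a₁₂ a₁₃ a₂₃ c₁ c₂ c₃ = 0 := by
  unfold ternaryQuad at h ⊢
  have e₁ := h 0 0 1 (by norm_num)
  have e₂ := h (3 / 4) 0 (5 / 4) (by norm_num)
  have e₃ := h (-(3 / 4)) 0 (5 / 4) (by norm_num)
  have e₄ := h 0 (3 / 4) (5 / 4) (by norm_num)
  have e₅ := h 0 (-(3 / 4)) (5 / 4) (by norm_num)
  have e₆ := h 2 2 3 (by norm_num)
  have h₃₃ : a₃₃ = 0 := by linear_combination (norm := module) e₁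
  have h₁₁ : a₁₁ = 0 := by
    linear_combination (norm := module) (8 / 9 : ℝ) • (e₂ + e₃) - (25 / 9 : ℝ) • e₁
  have h₂₂ : a₂₂ = 0 := by
    linear_combination (norm := module) (8 / 9 : ℝ) • (e₄ + e₅) - (25 / 9 : ℝ) • e₁
  have h₁₃ : a₁₃ = 0 := by linear_combination (norm := module) (8 / 15 : ℝ) • (e₂ - e₃)
  have h₂₃ : a₂₃ = 0 := by linear_combination (norm := module) (8 / 15 : ℝ) • (e₄ - e₅)
  have h₁₂ : a₁₂ = 0 := by
    linear_combination (norm := module) (1 / 4 : ℝ) • e₆ - h₁₁ - h₂₂ - (9 / 4 : ℝ) • h₃₃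
      - (3 / 2 : ℝ) • h₁₃ - (3 / 2 : ℝ) • h₂₃
  simp [h₁₁, h₂₂, h₃₃, h₁₂, h₁₃, h₂₃]

theorem ternaryQuad_eq_zero_of_forall_eq_one
    (h : ∀ c₁ c₂ c₃ : ℝ, c₁ ^ 2 + c₂ ^ 2 - c₃ ^ 2 = 1 →
      ternaryQuad a₁₁ a₂₂ a₃₃ a₁₂ a₁₃ a₂₃ c₁ c₂ c₃ = 0)
    (c₁ c₂ c₃ : ℝ) : ternaryQuad a₁₁ a₂₂ a₃₃ a₁₂ a₁₃ a₂₃ c₁ c₂ c₃ = 0 := by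
  unfold ternaryQuad at h ⊢
  have e₁ := h 1 0 0 (by norm_num)
  have e₂ := h 0 1 0 (by norm_num)
  have e₃ := h (5 / 4) 0 (3 / 4) (by norm_num)
  have e₄ := h (-(5 / 4)) 0 (3 / 4) (by norm_num)
  have e₅ := h 0 (5 / 4) (3 / 4) (by norm_num)
  have e₆ := h 0 (-(5 / 4)) (3 / 4) (by norm_num)
  have e₇ := h 1 1 1 (by norm_num)
  have h₁₁ : a₁₁ = 0 := by linear_combination (norm := module) e₁
  have h₂₂ : a₂₂ = 0 := by linear_combination (norm := module) e₂
  have h₃₃ : a₃₃ = 0 := by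
    linear_combination (norm := module) (8 / 9 : ℝ) • (e₃ + e₄) - (25 / 9 : ℝ) • e₁
  have h₁₃ : a₁₃ = 0 := by linear_combination (norm := module) (8 / 15 : ℝ) • (e₃ - e₄)
  have h₂₃ : a₂₃ = 0 := by linear_combination (norm := module) (8 / 15 : ℝ) • (e₅ - e₆)
  have h₁₂ : a₁₂ = 0 := by
    linear_combination (norm := module) e₇ - h₁₁ - h₂₂ - h₃₃ - h₁₃ - h₂₃
  simp [h₁₁, h₂₂, h₃₃, h₁₂, h₁₃, h₂₃]

end TernaryQuad

section Part02

variable {V : Type*} [AddCommGroup V] [Module ℝ V]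
  (J₁ J₂ J₃ : Module.End ℝ V) (B : V →ₗ[ℝ] V →ₗ[ℝ] V) (X Y : V)

def polar02 (K L : Module.End ℝ V) : V :=
  B (K X) (L Y) - K (B (L X) Y) - K (B X (L Y))

def part02Quad : ℝ → ℝ → ℝ → V :=
  ternaryQuad (B X Y + polar02 B X Y J₁ J₁) (B X Y + polar02 B X Y J₂ J₂)
    (-B X Y + polar02 B X Y J₃ J₃) (polar02 B X Y J₁ J₂ + polar02 B X Y J₂ J₁)
    (polar02 B X Y J₁ J₃ + polar02 B X Y J₃ J₁) (polar02 B X Y J₂ J₃ + polar02 B X Y J₃ J₂)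

theorem four_smul_part02 (c₁ c₂ c₃ : ℝ) :
    (4 : ℝ) • part02 (c₁ ^ 2 + c₂ ^ 2 - c₃ ^ 2) (c₁ • J₁ + c₂ • J₂ + c₃ • J₃)
      (fun X Y => B X Y) X Y = part02Quad J₁ J₂ J₃ B X Y c₁ c₂ c₃ := by
  simp only [part02, part02Quad, ternaryQuad, polar02, LinearMap.add_apply,
    LinearMap.smul_apply, map_add, map_smul]
  module

theorem part02_eq_zero_iff {ε c₁ c₂ c₃ : ℝ} (hε : c₁ ^ 2 + c₂ ^ 2 - c₃ ^ 2 = ε) :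
    part02 ε (c₁ • J₁ + c₂ • J₂ + c₃ • J₃) (fun X Y => B X Y) X Y = 0 ↔
      part02Quad J₁ J₂ J₃ B X Y c₁ c₂ c₃ = 0 := by
  subst hε
  rw [← four_smul_part02, smul_eq_zero_iff_right four_ne_zero]

end Part02

theorem part02_vanish_twistor_iff_reflector_general
    {V : Type*} [AddCommGroup V] [Module ℝ V]
    (J1 J2 J3 : Module.End ℝ V)
    (B : V →ₗ[ℝ] V →ₗ[ℝ] V) :
    (∀ K : Module.End ℝ V,
      (∃ c1 c2 c3 : ℝ, c1 ^ 2 + c2 ^ 2 - c3 ^ 2 = -1 ∧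
        K = c1 • J1 + c2 • J2 + c3 • J3) →
      ∀ X Y : V, part02 (-1) K (fun X Y => B X Y) X Y = 0) ↔
    (∀ K : Module.End ℝ V,
      (∃ b1 b2 b3 : ℝ, b1 ^ 2 + b2 ^ 2 - b3 ^ 2 = 1 ∧
        K = b1 • J1 + b2 • J2 + b3 • J3) →
      ∀ X Y : V, part02 1 K (fun X Y => B X Y) X Y = 0) := by
  constructor
  · rintro H K ⟨b1, b2, b3, hb, rfl⟩ X Y
    rw [part02_eq_zero_iff J1 J2 J3 B X Y hb, part02Quad]
    refine ternaryQuad_eq_zero_of_forall_eq_neg_one (fun c1 c2 c3 hc => ?_) b1 b2 b3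
    exact (part02_eq_zero_iff J1 J2 J3 B X Y hc).1 (H _ ⟨c1, c2, c3, hc, rfl⟩ X Y)
  · rintro H K ⟨c1, c2, c3, hc, rfl⟩ X Y
    rw [part02_eq_zero_iff J1 J2 J3 B X Y hc, part02Quad]
    refine ternaryQuad_eq_zero_of_forall_eq_one (fun b1 b2 b3 hb => ?_) c1 c2 c3
    exact (part02_eq_zero_iff J1 J2 J3 B X Y hb).1 (H _ ⟨b1, b2, b3, hb, rfl⟩ X Y)

/-- Lemma 3.1 (pointwise): for a paraquaternionic triple `(J₁, J₂, J₃)` on a real vector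
space `V` and an alternating bilinear `B : V × V → V`, the `(0,2)`-part of `B` vanishes for
every compatible complex structure (`c₁² + c₂² − c₃² = −1`) if and only if it vanishes for
every compatible paracomplex structure (`b₁² + b₂² − b₃² = 1`). -/
theorem part02_vanish_twistor_iff_reflector
    {V : Type*} [AddCommGroup V] [Module ℝ V]
    (J1 J2 J3 : Module.End ℝ V)
    (h1 : J1 * J1 = 1) (h2 : J2 * J2 = 1) (h3 : J3 * J3 = -1)
    (h12 : J1 * J2 = J3) (h21 : J2 * J1 = -J3)
    (B : V →ₗ[ℝ] V →ₗ[ℝ] V) (halt : ∀ X : V, B X X = 0) :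
    (∀ K : Module.End ℝ V,
      (∃ c1 c2 c3 : ℝ, c1 ^ 2 + c2 ^ 2 - c3 ^ 2 = -1 ∧
        K = c1 • J1 + c2 • J2 + c3 • J3) →
      ∀ X Y : V, part02 (-1) K (fun X Y => B X Y) X Y = 0) ↔
    (∀ K : Module.End ℝ V,
      (∃ b1 b2 b3 : ℝ, b1 ^ 2 + b2 ^ 2 - b3 ^ 2 = 1 ∧
        K = b1 • J1 + b2 • J2 + b3 • J3) →
      ∀ X Y : V, part02 1 K (fun X Y => B X Y) X Y = 0) :=
  part02_vanish_twistor_iff_reflector_general J1 J2 J3 B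
end

section
/- Let V be a real vector space, K an ℝ-linear endomorphism of V with K∘K = ε·id_V where ε ∈ {1, −1}, and S : V → End_ℝ(V) any ℝ-linear map. Set D(X,Y) := S_X(Y) − S_Y(X). Then for all X, Y ∈ V: 4·D^{0,2}_K(X,Y) = [S_{KX}, K](Y) − K([S_X, K](Y)) − [S_{KY}, K](X) + K([S_Y, K](X)). (This is identity (3.8) in the proof of Corollary 3.4, expressing the difference of the (0,2)-parts of the torsions of two connections in terms of their difference tensor S.) -/
section Part02

variable {V : Type*} [AddCommGroup V] [Module ℝ V] (ε : ℝ) (K : Module.End ℝ V)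

theorem four_smul_part02_s5 (B : V → V → V) (X Y : V) :
    (4 : ℝ) • part02 ε K B X Y = ε • B X Y + B (K X) (K Y) - K (B (K X) Y) - K (B X (K Y)) := by
  rw [part02, smul_smul]
  norm_num

theorem part02_sub (B C : V → V → V) (X Y : V) :
    part02 ε K (fun X Y => B X Y - C X Y) X Y = part02 ε K B X Y - part02 ε K C X Y := by
  simp only [part02, map_sub, ← smul_sub]
  congr 1
  module

theorem part02_swap (B : V → V → V) (X Y : V) :
    part02 ε K (fun X Y => B Y X) X Y = part02 ε K B Y X := by
  simp only [part02]
  congr 1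
  abel

theorem apply_apply_of_mul_self_eq_smul_one (hK : K * K = ε • (1 : Module.End ℝ V)) (v : V) :
    K (K v) = ε • v := by
  rw [← Module.End.mul_apply, hK, LinearMap.smul_apply, Module.End.one_apply]

theorem four_smul_part02_apply (hK : K * K = ε • (1 : Module.End ℝ V)) (S : V → Module.End ℝ V)
    (X Y : V) :
    (4 : ℝ) • part02 ε K (fun X Y => S X Y) X Y =
      (S (K X) * K - K * S (K X)) Y - K ((S X * K - K * S X) Y) := by
  simp only [four_smul_part02_s5, LinearMap.sub_apply, Module.End.mul_apply, map_sub,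
    apply_apply_of_mul_self_eq_smul_one ε K hK]
  abel

end Part02

theorem torsion_difference_02_identity_general
    {V : Type*} [AddCommGroup V] [Module ℝ V]
    (ε : ℝ)
    (K : Module.End ℝ V) (hK : K * K = ε • (1 : Module.End ℝ V))
    (S : V →ₗ[ℝ] Module.End ℝ V)
    (D : V → V → V) (hD : ∀ X Y : V, D X Y = S X Y - S Y X) :
    ∀ X Y : V,
      (4 : ℝ) • part02 ε K D X Y =
        (S (K X) * K - K * S (K X)) Y - K ((S X * K - K * S X) Y)
          - (S (K Y) * K - K * S (K Y)) X + K ((S Y * K - K * S Y) X) := by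
  intro X Y
  obtain rfl : D = fun X Y => S X Y - S Y X := funext₂ hD
  rw [part02_sub, part02_swap (B := fun X Y => S X Y), smul_sub,
    four_smul_part02_apply ε K hK S, four_smul_part02_apply ε K hK S]
  abel

/-- Identity (3.8): for `K` with `K ∘ K = ε • id`, `ε ∈ {1, −1}`, a linear
`S : V → End ℝ V` and `D(X,Y) := S_X Y − S_Y X`, one has
`4 D^{0,2}_K(X,Y) = [S_{KX},K]Y − K [S_X,K]Y − [S_{KY},K]X + K [S_Y,K]X`. -/
theorem torsion_difference_02_identity
    {V : Type*} [AddCommGroup V] [Module ℝ V]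
    (ε : ℝ) (hε : ε = 1 ∨ ε = -1)
    (K : Module.End ℝ V) (hK : K * K = ε • (1 : Module.End ℝ V))
    (S : V →ₗ[ℝ] Module.End ℝ V)
    (D : V → V → V) (hD : ∀ X Y : V, D X Y = S X Y - S Y X) :
    ∀ X Y : V,
      (4 : ℝ) • part02 ε K D X Y =
        (S (K X) * K - K * S (K X)) Y - K ((S X * K - K * S X) Y)
          - (S (K Y) * K - K * S (K Y)) X + K ((S Y * K - K * S Y) X) :=
  torsion_difference_02_identity_general ε K hK S D hD
end

section
/- Let V be a real vector space with a paraquaternionic triple (J₁, J₂, J₃), let S : V → End_ℝ(V) admit a decomposition S_X = S⁰_X + s¹(X)·J₁ + s²(X)·J₂ + s³(X)·J₃ with S⁰_X commuting with each Jₐ, and set D(X,Y) := S_X(Y) − S_Y(X). Then for all X, Y ∈ V (using the (0,2)-part with respect to J₂, for which ε = +1): 2·D^{0,2}_{J₂}(X,Y) = (s¹(X) + s³(J₂X))·J₁Y + (s¹(J₂X) + s³(X))·J₃Y − (s¹(Y) + s³(J₂Y))·J₁X − (s¹(J₂Y) + s³(Y))·J₃X. (This is identity (3.9) in the proof of Corollary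 3.4.) -/
/-!
Write `S_X = (S⁰_X + s²(X) J₂) + s¹(X) J₁ + s³(X) J₃`. The `(0,2)`-part with respect to `K`
is additive in the bilinear map, and it kills the antisymmetrisation of any `T` whose values
commute with `K`; in particular it kills the first summand. For `T_X = f(X) J` with `J`
anticommuting with `K`, the four terms of the `(0,2)`-part pair up, giving
`2 B^{0,2} = ε f(X) JY + f(KX) JKY − ε f(Y) JX − f(KY) JKX`. With `K = J₂` and
`J₁J₂ = J₃`, `J₃J₂ = J₁` this is the claimed formula.
-/

namespace Part02

variable {V : Type*} [AddCommGroup V] [Module ℝ V]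

def skew (T : V → Module.End ℝ V) (X Y : V) : V := T X Y - T Y X

lemma skew_add (T T' : V → Module.End ℝ V) : skew (T + T') = skew T + skew T' := by
  ext X Y
  simp only [skew, Pi.add_apply, LinearMap.add_apply]
  abel

lemma part02_add (ε : ℝ) (K : Module.End ℝ V) (B B' : V → V → V) :
    part02 ε K (B + B') = part02 ε K B + part02 ε K B' := by
  ext X Y
  simp only [part02, Pi.add_apply, map_add, smul_add]
  module

variable {ε : ℝ} {K : Module.End ℝ V}

lemma apply_apply_of_mul_self (hK : K * K = ε • 1) (v : V) : K (K v) = ε • v := by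
  simpa using DFunLike.congr_fun hK v

lemma part02_skew_eq_zero_of_commute (hK : K * K = ε • 1) {T : V → Module.End ℝ V}
    (hT : ∀ X, Commute (T X) K) : part02 ε K (skew T) = 0 := by
  have hTK : ∀ X v, K (T X v) = T X (K v) := fun X v => by
    simpa using DFunLike.congr_fun (hT X).symm v
  ext X Y
  simp only [part02, skew, map_sub, hTK, apply_apply_of_mul_self hK, map_smul, Pi.zero_apply]
  module

lemma two_smul_part02_skew_smul_of_anticommute (hK : K * K = ε • 1) {J : Module.End ℝ V}
    (hJK : K * J = -(J * K)) (f : V → ℝ) (X Y : V) :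
    (2 : ℝ) • part02 ε K (skew fun X => f X • J) X Y =
      ε • f X • J Y + f (K X) • J (K Y) - (ε • f Y • J X + f (K Y) • J (K X)) := by
  have hKJ : ∀ v, K (J v) = -J (K v) := fun v => by
    simpa using DFunLike.congr_fun hJK v
  simp only [part02, skew, LinearMap.smul_apply, map_sub, map_smul, hKJ,
    apply_apply_of_mul_self hK, smul_neg]
  module

end Part02

open Part02 in
theorem torsion_difference_02_J2_formula_general
    {V : Type*} [AddCommGroup V] [Module ℝ V]
    (J1 J2 J3 : Module.End ℝ V)
    (h2 : J2 * J2 = 1)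
    (h12 : J1 * J2 = J3) (h21 : J2 * J1 = -J3)
    (S : V →ₗ[ℝ] Module.End ℝ V)
    (S0 : V → Module.End ℝ V) (s1 s2 s3 : V →ₗ[ℝ] ℝ)
    (hS : ∀ X : V, S X = S0 X + s1 X • J1 + s2 X • J2 + s3 X • J3)
    (hc2 : ∀ X : V, Commute (S0 X) J2)
    (D : V → V → V) (hD : ∀ X Y : V, D X Y = S X Y - S Y X) :
    ∀ X Y : V,
      (2 : ℝ) • part02 1 J2 D X Y =
        (s1 X + s3 (J2 X)) • J1 Y + (s1 (J2 X) + s3 X) • J3 Y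
          - (s1 Y + s3 (J2 Y)) • J1 X - (s1 (J2 Y) + s3 Y) • J3 X := by
  intro X Y
  have hK : J2 * J2 = (1 : ℝ) • 1 := by rw [one_smul, h2]
  have h32 : J3 * J2 = J1 := by rw [← h12, mul_assoc, h2, mul_one]
  have h23 : J2 * J3 = -(J3 * J2) := by rw [← h12, ← mul_assoc, h21, h12, neg_mul]
  have hD_split : D = skew (fun X => S0 X + s2 X • J2) + skew (fun X => s1 X • J1)
      + skew (fun X => s3 X • J3) := by
    rw [← skew_add, ← skew_add]
    ext X Y
    simp only [hD, skew, hS, Pi.add_apply]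
    abel_nf
  have hJ1 : ∀ v, J1 (J2 v) = J3 v := fun v => by rw [← h12]; rfl
  have hJ3 : ∀ v, J3 (J2 v) = J1 v := fun v => by rw [← h32]; rfl
  rw [hD_split, part02_add, part02_add,
    part02_skew_eq_zero_of_commute hK fun X => (hc2 X).add_left ((Commute.refl J2).smul_left _)]
  simp only [Pi.add_apply, zero_add, smul_add]
  rw [two_smul_part02_skew_smul_of_anticommute hK (by rw [h21, h12]) s1,
    two_smul_part02_skew_smul_of_anticommute hK h23 s3]
  simp only [hJ1, hJ3]
  module

/-- Identity (3.9): for a paraquaternionic triple `(J₁, J₂, J₃)` and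
`S_X = S⁰_X + s¹(X)J₁ + s²(X)J₂ + s³(X)J₃` with `S⁰_X` commuting with each `Jₐ`,
setting `D(X,Y) = S_X Y − S_Y X`, one has (with `ε = +1` for `J₂`)
`2 D^{0,2}_{J₂}(X,Y) = (s¹(X)+s³(J₂X)) J₁Y + (s¹(J₂X)+s³(X)) J₃Y`
`− (s¹(Y)+s³(J₂Y)) J₁X − (s¹(J₂Y)+s³(Y)) J₃X`. -/
theorem torsion_difference_02_J2_formula
    {V : Type*} [AddCommGroup V] [Module ℝ V]
    (J1 J2 J3 : Module.End ℝ V)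
    (h1 : J1 * J1 = 1) (h2 : J2 * J2 = 1) (h3 : J3 * J3 = -1)
    (h12 : J1 * J2 = J3) (h21 : J2 * J1 = -J3)
    (S : V →ₗ[ℝ] Module.End ℝ V)
    (S0 : V → Module.End ℝ V) (s1 s2 s3 : V →ₗ[ℝ] ℝ)
    (hS : ∀ X : V, S X = S0 X + s1 X • J1 + s2 X • J2 + s3 X • J3)
    (hc1 : ∀ X : V, Commute (S0 X) J1) (hc2 : ∀ X : V, Commute (S0 X) J2)
    (hc3 : ∀ X : V, Commute (S0 X) J3)
    (D : V → V → V) (hD : ∀ X Y : V, D X Y = S X Y - S Y X) :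
    ∀ X Y : V,
      (2 : ℝ) • part02 1 J2 D X Y =
        (s1 X + s3 (J2 X)) • J1 Y + (s1 (J2 X) + s3 X) • J3 Y
          - (s1 Y + s3 (J2 Y)) • J1 X - (s1 (J2 Y) + s3 Y) • J3 X :=
  torsion_difference_02_J2_formula_general J1 J2 J3 h2 h12 h21 S S0 s1 s2 s3 hS hc2 D hD
end

section
/- Let V be a real vector space of dimension 4n (n ≥ 1) with a paraquaternionic triple (J₁, J₂, J₃), let S : V → End_ℝ(V) admit a decomposition S_X = S⁰_X + s¹(X)·J₁ + s²(X)·J₂ + s³(X)·J₃ with S⁰_X commuting with each Jₐ, and set D(X,Y) := S_X(Y) − S_Y(X). Then: (a) D^{0,2}_{J₂} vanishes identically if and only if s¹(J₁X) = s³(J₃X) for all X ∈ V; and (b) D^{0,2}_{J₁} vanishes identically if and only if s²(J₂X) = s³(J₃X) for all X ∈ V. (These are the two equivalences established in the proof of Corollary 3.4.) -/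
/-! With respect to an involution `K`, the `(0,2)`-part kills every `S_X` commuting with `K`,
and on an `A_X` anticommuting with `K` it equals `½(A_X - K A_{KX})`. Writing the anticommuting
part of `S` as `f(X) P + h(X) KP`, with `P` an involution anticommuting with `K`, one gets
`D^{0,2}_K(X,Y) = ½(E_X Y - E_Y X)` for `E_X = g(X) P - g(KX) KP` and `g = f - h ∘ K`.
If this vanishes, the endomorphisms `Y ↦ P E_X Y` and `Y ↦ P E_Y X` agree; since `tr K = 0`
their traces are `dim V · g(X)` and `2 g(X)`, so `g = 0` as `dim V = 4n ≠ 2`.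
For `(K, P) = (J₂, J₁)` and `(J₁, J₂)` the condition `g ∘ P = 0` is the stated one. -/

open LinearMap Module

theorem LinearMap.trace_eq_zero_of_mul_eq_neg_mul {R M : Type*} [CommRing R] [NoZeroDivisors R]
    [CharZero R] [AddCommGroup M] [Module R M] {K P : Module.End R M} (hP : P * P = 1)
    (hPK : P * K = -(K * P)) : trace R M K = 0 := by
  refine CharZero.eq_neg_self_iff.mp ?_
  calc trace R M K = trace R M (P * (K * P)) := by rw [trace_mul_comm, mul_assoc, hP, mul_one]
    _ = -trace R M K := by rw [← mul_assoc, hPK, neg_mul, mul_assoc, hP, mul_one, map_neg]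

section part02

variable {V : Type*} [AddCommGroup V] [Module ℝ V]

theorem part02_sub_swap (ε : ℝ) (K : Module.End ℝ V) (B : V → V → V) (X Y : V) :
    part02 ε K (fun X Y => B X Y - B Y X) X Y = part02 ε K B X Y - part02 ε K B Y X := by
  simp only [part02, map_sub]
  module

theorem part02_add (ε : ℝ) (K : Module.End ℝ V) (B B' : V → V → V) (X Y : V) :
    part02 ε K (fun X Y => B X Y + B' X Y) X Y = part02 ε K B X Y + part02 ε K B' X Y := by
  simp only [part02, map_add]
  module

theorem part02_eq_zero_of_commute {ε : ℝ} {K : Module.End ℝ V} (hK : K * K = ε • 1)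
    {C : V → Module.End ℝ V} (hC : ∀ X, Commute (C X) K) (X Y : V) :
    part02 ε K (fun X Y => C X Y) X Y = 0 := by
  have hKK (v : V) : K (K v) = ε • v := by simpa using congr($hK v)
  have hKC (Z v : V) : K (C Z v) = C Z (K v) := by simpa using congr($((hC Z).eq) v).symm
  simp [part02, hKC, hKK]

theorem part02_eq_of_anticommute {ε : ℝ} {K : Module.End ℝ V} (hK : K * K = ε • 1)
    {A : V → Module.End ℝ V} (hA : ∀ X, A X * K = -(K * A X)) (X Y : V) :
    part02 ε K (fun X Y => A X Y) X Y = (2⁻¹ : ℝ) • (ε • A X Y - K (A (K X) Y)) := by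
  have hKK (v : V) : K (K v) = ε • v := by simpa using congr($hK v)
  have hAK (Z v : V) : A Z (K v) = -K (A Z v) := by simpa using congr($(hA Z) v)
  simp only [part02, hAK, map_neg, hKK]
  module

theorem LinearMap.eq_zero_of_forall_smul_sub_smul_symm [FiniteDimensional ℝ V]
    (hd : finrank ℝ V ≠ 2) {K P : Module.End ℝ V} (hK : K * K = 1) (hP : P * P = 1)
    (hPK : P * K = -(K * P))
    (g : V →ₗ[ℝ] ℝ)
    (hsym : ∀ X Y, g X • P Y - g (K X) • K (P Y) = g Y • P X - g (K Y) • K (P X)) :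
    g = 0 := by
  have hKK (v : V) : K (K v) = v := by simpa using congr($hK v)
  have hPP (v : V) : P (P v) = v := by simpa using congr($hP v)
  have hPKP (v : V) : P (K (P v)) = -K v := by
    simpa [hPP] using congr($hPK (P v))
  ext X
  have hend : g X • (1 : Module.End ℝ V) + g (K X) • K =
      g.smulRight X + (g ∘ₗ K).smulRight (K X) := by
    ext Y
    simpa [hPP, hPKP] using congr(P $(hsym X Y))
  have htr := congr(trace ℝ V $hend)
  simp only [map_add, map_smul, trace_one, trace_eq_zero_of_mul_eq_neg_mul hP hPK,
    trace_smulRight, comp_apply, hKK, smul_eq_mul, mul_zero, add_zero] at htr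
  have hd' : (finrank ℝ V : ℝ) - 2 ≠ 0 := sub_ne_zero.mpr (by exact_mod_cast hd)
  simpa [hd'] using (by linear_combination htr : g X * ((finrank ℝ V : ℝ) - 2) = 0)

theorem part02_eq_of_decomposition {K P : Module.End ℝ V} (hK : K * K = 1)
    (hPK : P * K = -(K * P)) {C : V → Module.End ℝ V} (hC : ∀ X, Commute (C X) K)
    (f h : V →ₗ[ℝ] ℝ) {S : V → Module.End ℝ V}
    (hS : ∀ X, S X = C X + f X • P + h X • (K * P)) {D : V → V → V}
    (hD : ∀ X Y, D X Y = S X Y - S Y X) (X Y : V) :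
    part02 1 K D X Y = (2⁻¹ : ℝ) •
      ((f X - h (K X)) • P Y - (f (K X) - h X) • K (P Y) -
        ((f Y - h (K Y)) • P X - (f (K Y) - h Y) • K (P X))) := by
  set A : V → Module.End ℝ V := fun X => f X • P + h X • (K * P)
  have hA (Z : V) : A Z * K = -(K * A Z) := by
    simp only [A, add_mul, mul_add, smul_mul_assoc, mul_smul_comm, mul_assoc, hPK, mul_neg,
      ← mul_assoc K K, hK, one_mul]
    module
  have hD' : D = fun X Y =>
      (fun X Y => C X Y + A X Y) X Y - (fun X Y => C X Y + A X Y) Y X := by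
    ext X Y
    simp only [hD, hS, A, LinearMap.add_apply, add_assoc]
  have hKK (v : V) : K (K v) = v := by simpa using congr($hK v)
  rw [hD', part02_sub_swap, part02_add, part02_add, part02_eq_zero_of_commute (by simpa) hC,
    part02_eq_zero_of_commute (by simpa) hC, part02_eq_of_anticommute (by simpa) hA,
    part02_eq_of_anticommute (by simpa) hA]
  simp only [A, LinearMap.add_apply, LinearMap.smul_apply, Module.End.mul_apply, map_add,
    map_smul, hKK]
  module

theorem part02_eq_zero_iff_of_decomposition [FiniteDimensional ℝ V] (hd : finrank ℝ V ≠ 2)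
    {K P : Module.End ℝ V} (hK : K * K = 1) (hP : P * P = 1) (hPK : P * K = -(K * P))
    {C : V → Module.End ℝ V} (hC : ∀ X, Commute (C X) K) (f h : V →ₗ[ℝ] ℝ)
    {S : V → Module.End ℝ V}
    (hS : ∀ X, S X = C X + f X • P + h X • (K * P)) {D : V → V → V}
    (hD : ∀ X Y, D X Y = S X Y - S Y X) :
    (∀ X Y, part02 1 K D X Y = 0) ↔ ∀ X, f X = h (K X) := by
  have hKK (v : V) : K (K v) = v := by simpa using congr($hK v)
  simp only [part02_eq_of_decomposition hK hPK hC f h hS hD, smul_eq_zero, inv_eq_zero,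
    two_ne_zero, false_or, sub_eq_zero]
  constructor
  · intro hsym X
    have hg := eq_zero_of_forall_smul_sub_smul_symm hd hK hP hPK (f - h ∘ₗ K)
      (by simpa [hKK] using hsym)
    simpa [sub_eq_zero] using congr($hg X)
  · intro hfh X Y
    simp [hfh, hKK]

end part02

theorem torsion_difference_02_vanishing_iff_general
    {V : Type*} [AddCommGroup V] [Module ℝ V] [FiniteDimensional ℝ V]
    (n : ℕ) (hdim : Module.finrank ℝ V = 4 * n)
    (J1 J2 J3 : Module.End ℝ V)
    (h1 : J1 * J1 = 1) (h2 : J2 * J2 = 1)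
    (h12 : J1 * J2 = J3) (h21 : J2 * J1 = -J3)
    (S : V →ₗ[ℝ] Module.End ℝ V)
    (S0 : V → Module.End ℝ V) (s1 s2 s3 : V →ₗ[ℝ] ℝ)
    (hS : ∀ X : V, S X = S0 X + s1 X • J1 + s2 X • J2 + s3 X • J3)
    (hc1 : ∀ X : V, Commute (S0 X) J1) (hc2 : ∀ X : V, Commute (S0 X) J2)
    (D : V → V → V) (hD : ∀ X Y : V, D X Y = S X Y - S Y X) :
    ((∀ X Y : V, part02 1 J2 D X Y = 0) ↔ (∀ X : V, s1 (J1 X) = s3 (J3 X))) ∧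
    ((∀ X Y : V, part02 1 J1 D X Y = 0) ↔ (∀ X : V, s2 (J2 X) = s3 (J3 X))) := by
  have hd : finrank ℝ V ≠ 2 := by omega
  have hJ1 : Function.Involutive J1 := fun v => by simpa using congr($h1 v)
  have hJ2 : Function.Involutive J2 := fun v => by simpa using congr($h2 v)
  have hJ21 (v : V) : J2 (J1 v) = -J3 v := by simpa using congr($h21 v)
  have hJ12 (v : V) : J1 (J2 v) = J3 v := by simpa using congr($h12 v)
  constructor
  · rw [part02_eq_zero_iff_of_decomposition hd h2 h1 (by rw [h12, h21, neg_neg])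
      (fun X => (hc2 X).add_left ((Commute.refl J2).smul_left (s2 X))) s1 (-s3)
      (fun X => by rw [hS X, h21, LinearMap.neg_apply]; module) hD, hJ1.surjective.forall]
    simp [hJ21]
  · rw [part02_eq_zero_iff_of_decomposition hd h1 h2 (by rw [h12, h21])
      (fun X => (hc1 X).add_left ((Commute.refl J1).smul_left (s1 X))) s2 s3
      (fun X => by rw [hS X, h12]) hD, hJ2.surjective.forall]
    simp [hJ12]

/-- The two equivalences from the proof of Corollary 3.4: for a paraquaternionic triple
`(J₁, J₂, J₃)` on a real vector space of dimension `4n`, `n ≥ 1`, and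
`S_X = S⁰_X + s¹(X)J₁ + s²(X)J₂ + s³(X)J₃` with `S⁰_X` commuting with each `Jₐ`,
`D(X,Y) := S_X Y − S_Y X`:
(a) `D^{0,2}_{J₂} ≡ 0 ↔ s¹(J₁X) = s³(J₃X)` for all `X`;
(b) `D^{0,2}_{J₁} ≡ 0 ↔ s²(J₂X) = s³(J₃X)` for all `X`. -/
theorem torsion_difference_02_vanishing_iff
    {V : Type*} [AddCommGroup V] [Module ℝ V] [FiniteDimensional ℝ V]
    (n : ℕ) (hn : 1 ≤ n) (hdim : Module.finrank ℝ V = 4 * n)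
    (J1 J2 J3 : Module.End ℝ V)
    (h1 : J1 * J1 = 1) (h2 : J2 * J2 = 1) (h3 : J3 * J3 = -1)
    (h12 : J1 * J2 = J3) (h21 : J2 * J1 = -J3)
    (S : V →ₗ[ℝ] Module.End ℝ V)
    (S0 : V → Module.End ℝ V) (s1 s2 s3 : V →ₗ[ℝ] ℝ)
    (hS : ∀ X : V, S X = S0 X + s1 X • J1 + s2 X • J2 + s3 X • J3)
    (hc1 : ∀ X : V, Commute (S0 X) J1) (hc2 : ∀ X : V, Commute (S0 X) J2)
    (hc3 : ∀ X : V, Commute (S0 X) J3)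
    (D : V → V → V) (hD : ∀ X Y : V, D X Y = S X Y - S Y X) :
    ((∀ X Y : V, part02 1 J2 D X Y = 0) ↔ (∀ X : V, s1 (J1 X) = s3 (J3 X))) ∧
    ((∀ X Y : V, part02 1 J1 D X Y = 0) ↔ (∀ X : V, s2 (J2 X) = s3 (J3 X))) :=
  torsion_difference_02_vanishing_iff_general n hdim J1 J2 J3 h1 h2 h12 h21 S S0 s1 s2 s3 hS hc1 hc2
    D hD
end

section
/- Let V be a real vector space with a paraquaternionic triple (J₁, J₂, J₃) and let B : V × V → V be an alternating ℝ-bilinear map. If B^{0,2}_{J₃} = 0 and B^{0,2}_{J_t} = 0 for every t ∈ ℝ, where J_t := sinh(t)·J₁ + cosh(t)·J₃ (each J_t satisfies J_t² = −id_V), then B^{0,2}_{J₁} = 0. (This is the computation carried out in the proof of Lemma 3.1.) -/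
/-!
Writing `part02 ε K B = (ε / 4) • B + Q K`, the map `K ↦ Q K` is a quadratic form in `K`, so
`part02` scales by `a ^ 2` (together with `ε`) and satisfies a parallelogram law. For
`c = cosh 1`, `s = sinh 1` and `J_{±1} = c • J₃ ± s • J₁` this gives
`part02 (-1) J_{+1} + part02 (-1) J_{-1} = 2 c² • part02 (-1) J₃ + 2 s² • part02 1 J₁`,
the parameters matching since `-c² + s² = -1`; as `s ≠ 0`, the last term must vanish.
-/

section Part02

variable {V : Type*} [AddCommGroup V] [Module ℝ V]

theorem part02_smul (a ε : ℝ) (K : Module.End ℝ V) (B : V →ₗ[ℝ] V →ₗ[ℝ] V) (X Y : V) :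
    part02 (a ^ 2 * ε) (a • K) (fun X Y => B X Y) X Y =
      a ^ 2 • part02 ε K (fun X Y => B X Y) X Y := by
  simp only [part02, LinearMap.smul_apply, map_smul]
  module

theorem part02_add_add_part02_sub (ε₁ ε₂ : ℝ) (L M : Module.End ℝ V)
    (B : V →ₗ[ℝ] V →ₗ[ℝ] V) (X Y : V) :
    part02 (ε₁ + ε₂) (L + M) (fun X Y => B X Y) X Y +
        part02 (ε₁ + ε₂) (L - M) (fun X Y => B X Y) X Y =
      (2 : ℝ) • (part02 ε₁ L (fun X Y => B X Y) X Y + part02 ε₂ M (fun X Y => B X Y) X Y) := by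
  simp only [part02, LinearMap.add_apply, LinearMap.sub_apply, map_add, map_sub]
  module

end Part02

theorem part02_J1_vanishes_of_Jt_general
    {V : Type*} [AddCommGroup V] [Module ℝ V]
    (J1 J3 : Module.End ℝ V)
    (B : V →ₗ[ℝ] V →ₗ[ℝ] V)
    (h0 : ∀ X Y : V, part02 (-1) J3 (fun X Y => B X Y) X Y = 0)
    (ht : ∀ (t : ℝ) (X Y : V),
      part02 (-1) (Real.sinh t • J1 + Real.cosh t • J3) (fun X Y => B X Y) X Y = 0) :
    ∀ X Y : V, part02 1 J1 (fun X Y => B X Y) X Y = 0 := by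
  intro X Y
  set s := Real.sinh 1
  set c := Real.cosh 1
  have hε : c ^ 2 * -1 + s ^ 2 * 1 = -1 := by linarith [Real.cosh_sq_sub_sinh_sq (1 : ℝ)]
  have hplus : part02 (-1) (c • J3 + s • J1) (fun X Y => B X Y) X Y = 0 := by
    rw [add_comm]; exact ht 1 X Y
  have hminus : part02 (-1) (c • J3 - s • J1) (fun X Y => B X Y) X Y = 0 := by
    simpa [Real.sinh_neg, Real.cosh_neg, neg_add_eq_sub] using ht (-1) X Y
  have hsum := part02_add_add_part02_sub (c ^ 2 * -1) (s ^ 2 * 1) (c • J3) (s • J1) B X Y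
  rw [hε, hplus, hminus, part02_smul, part02_smul, h0, smul_zero, zero_add, zero_add] at hsum
  have hs : s ^ 2 ≠ 0 := pow_ne_zero 2 (Real.sinh_pos_iff.mpr one_pos).ne'
  exact ((smul_eq_zero.mp ((smul_eq_zero.mp hsum.symm).resolve_left two_ne_zero)).resolve_left hs)

/-- The computation in the proof of Lemma 3.1: if the `(0,2)`-part of an alternating
bilinear `B` vanishes with respect to `J₃` and with respect to every almost complex
structure `J_t = sinh t · J₁ + cosh t · J₃`, then it vanishes with respect to `J₁`
(taking `ε = −1` for `J₃` and each `J_t`, and `ε = +1` for `J₁`). -/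
theorem part02_J1_vanishes_of_Jt
    {V : Type*} [AddCommGroup V] [Module ℝ V]
    (J1 J2 J3 : Module.End ℝ V)
    (h1 : J1 * J1 = 1) (h2 : J2 * J2 = 1) (h3 : J3 * J3 = -1)
    (h12 : J1 * J2 = J3) (h21 : J2 * J1 = -J3)
    (B : V →ₗ[ℝ] V →ₗ[ℝ] V) (halt : ∀ X : V, B X X = 0)
    (h0 : ∀ X Y : V, part02 (-1) J3 (fun X Y => B X Y) X Y = 0)
    (ht : ∀ (t : ℝ) (X Y : V),
      part02 (-1) (Real.sinh t • J1 + Real.cosh t • J3) (fun X Y => B X Y) X Y = 0) :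
    ∀ X Y : V, part02 1 J1 (fun X Y => B X Y) X Y = 0 :=
  part02_J1_vanishes_of_Jt_general J1 J3 B h0 ht
end
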